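/- Let n ≥ 1 be an integer and let e ∈ K_∞⟨t⟩ with ‖e‖ < q^n. Then the series ξ_e := ∑_{k=0}^∞ e^{(k)} · ∏_{i=0}^{k} (t−θ^{q^i})^{−n} converges in K_∞⟨t⟩, satisfies ‖ξ_e‖ < 1, and solves the difference equation (t−θ)^n ξ_e − ξ_e^{(1)} = e. -/

import Mathlib

open scoped Classical ENNReal
open Filter

noncomputable section

namespace Carlitz

variable (F : Type) [Field F] [Fintype F]

/-- `K∞ = 𝔽((1/θ))`, realized as the field of formal Laurent series over `F`;
the Laurent-series variable plays the role of `1/θ`. -/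
abbrev Kinf := LaurentSeries F

/-- `θ ∈ K∞`, the inverse of the Laurent-series variable. -/
def theta : Kinf F := HahnSeries.single (-1 : ℤ) (1 : F)

/-- The absolute value `|x| = q ^ (deg_θ x)`, with values in `ℝ≥0∞`. -/
def Kabs {R : Type} [Zero R] (q : ℕ) (x : HahnSeries ℤ R) : ℝ≥0∞ :=
  if x = 0 then 0 else (q : ℝ≥0∞) ^ (-x.order)

/-- The ambient ring of the Tate algebra: formal power series in `t` over `K∞`. -/
abbrev TS := PowerSeries (Kinf F)

/-- The `i`-th `t`-coefficient. -/
def coeffT (i : ℕ) (f : TS F) : Kinf F := PowerSeries.coeff (R := Kinf F) i f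

/-- Membership in the Tate algebra `K∞⟨t⟩`: the coefficients tend to `0`. -/
def IsTate (f : TS F) : Prop :=
  Tendsto (fun i => Kabs (Fintype.card F) (coeffT F i f)) atTop (nhds 0)

/-- The Gauss norm `‖f‖ = sup_i |a_i|`. -/
def gnorm (f : TS F) : ℝ≥0∞ := ⨆ i, Kabs (Fintype.card F) (coeffT F i f)

/-- The twist `f ↦ f⁽¹⁾`: the coefficientwise `q`-power Frobenius. -/
def twist (f : TS F) : TS F := PowerSeries.mk fun i => coeffT F i f ^ Fintype.card F

/-- The iterated twist `f ↦ f⁽ᵏ⁾`. -/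
def twistIter (k : ℕ) (f : TS F) : TS F := (twist F)^[k] f

/-- The variable `t` of the Tate algebra. -/
def tt : TS F := PowerSeries.X

/-- `θ`, viewed as a constant of `K∞⟨t⟩`. -/
def th : TS F := PowerSeries.C (R := Kinf F) (theta F)

/-- The embedding `𝔽[θ] → K∞` sending the polynomial variable to `θ`. -/
def polyK : Polynomial F →+* Kinf F :=
  Polynomial.eval₂RingHom (HahnSeries.C : F →+* Kinf F) (theta F)

/-- The embedding `𝔽[θ][t] → K∞⟨t⟩`: the outer variable goes to `t`,
the inner variable goes to `θ`. -/
def polyT : Polynomial (Polynomial F) →+* TS F :=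
  Polynomial.eval₂RingHom ((PowerSeries.C (R := Kinf F)).comp (polyK F)) PowerSeries.X

/-- The subring `𝔽[θ,t] ⊆ K∞⟨t⟩`. -/
def PolyTT : Set (TS F) := Set.range (polyT F)

/-- The subset of `𝔽[θ,t]` of elements of `θ`-degree `< n`. -/
def PolyDegLt (n : ℕ) : Set (TS F) :=
  {f | ∃ P : Polynomial (Polynomial F), (∀ i, (P.coeff i).degree < (n : ℕ)) ∧ f = polyT F P}

/-- The action of `𝔽[t]` on `K∞⟨t⟩`: `a • f` is `actT a * f`. -/
def actT : Polynomial F →+* TS F :=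
  Polynomial.eval₂RingHom ((PowerSeries.C (R := Kinf F)).comp (HahnSeries.C : F →+* Kinf F))
    PowerSeries.X

/-- Convergence in `K∞⟨t⟩` with respect to the Gauss norm:
`L` is the limit of the sequence `s`. -/
def TT (s : ℕ → TS F) (L : TS F) : Prop :=
  Tendsto (fun N => gnorm F (L - s N)) atTop (nhds 0)

/-- Convergence in `K∞`: `L` is the limit of the sequence `s`. -/
def KT (q : ℕ) (s : ℕ → Kinf F) (L : Kinf F) : Prop :=
  Tendsto (fun N => Kabs q (L - s N)) atTop (nhds 0)

/-- Partial products defining `ν_n = (−θ)^{−h} ∏_{j≥0} (1 − t·θ^{−qʲ})ⁿ`,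
where `n = h(q−1) + δ`. -/
def nuPartial (n h N : ℕ) : TS F :=
  PowerSeries.C (R := Kinf F) ((-theta F)⁻¹ ^ h) *
    ∏ j ∈ Finset.range N,
      (1 - tt F * PowerSeries.C (R := Kinf F) ((theta F)⁻¹ ^ Fintype.card F ^ j)) ^ n

/-- Partial products defining `ω_n = (−θ)^m ∏_{i≥0} (1 − t·θ^{−qⁱ})^{−n}`,
where `n = m(q−1)`; `ω_n` is the `n`-th power of the Anderson–Thakur function. -/
def omegaPartial (n m N : ℕ) : TS F :=
  PowerSeries.C (R := Kinf F) ((-theta F) ^ m) *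
    ∏ i ∈ Finset.range N,
      ((1 - tt F * PowerSeries.C (R := Kinf F) ((theta F)⁻¹ ^ Fintype.card F ^ i)) ^ n)⁻¹

/-- Partial sums defining `ξ_e = ∑_{k≥0} e⁽ᵏ⁾ ∏_{i=0}^{k} (t−θ^{qⁱ})^{−n}`. -/
def xiPartial (n : ℕ) (e : TS F) (N : ℕ) : TS F :=
  ∑ k ∈ Finset.range N, twistIter F k e *
    (∏ i ∈ Finset.range (k + 1),
      (tt F - PowerSeries.C (R := Kinf F) (theta F ^ Fintype.card F ^ i)) ^ n)⁻¹

/-- Partial sums defining `s_h = h + ∑_{i≥1} h⁽ⁱ⁾ ∏_{j=0}^{i−1} (t−θ^{qʲ})^{−n}`. -/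
def sPartial (n : ℕ) (h : TS F) (N : ℕ) : TS F :=
  ∑ i ∈ Finset.range N, twistIter F i h *
    (∏ j ∈ Finset.range i,
      (tt F - PowerSeries.C (R := Kinf F) (theta F ^ Fintype.card F ^ j)) ^ n)⁻¹

/-- The map `β : f ↦ f − (t−θ)ⁿ f⁽¹⁾`. -/
def beta (n : ℕ) (f : TS F) : TS F := f - (tt F - th F) ^ n * twist F f

/-- The set of integral extension representatives
`X_n = {ξ ∈ K∞⟨t⟩ : (t−θ)ⁿ ξ − ξ⁽¹⁾ ∈ 𝔽[θ,t]}`. -/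
def Xset (n : ℕ) : Set (TS F) :=
  {ξ | IsTate F ξ ∧ (tt F - th F) ^ n * ξ - twist F ξ ∈ PolyTT F}

end Carlitz

/-!
Write `uᵢ = t − θ^{qⁱ}`. Since `|θ^{qⁱ}| > 1`, `uᵢ⁻¹ = −∑ⱼ θ^{−qⁱ(j+1)} tʲ` has Gauss norm
`q^{−qⁱ}`; and since norms lie in `q^ℤ`, `‖e‖ < qⁿ` means `‖e‖ ≤ q^{n−1}`. Hence the `k`-th term
of the series has norm at most `q^{(n−1)qᵏ − n(1+q+⋯+qᵏ)} ≤ q^{−qᵏ} ≤ q^{−(k+1)}`, so the partial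
sums `E_N` converge to some `ξ` with `‖ξ‖ ≤ q⁻¹`, which is Tate because every `E_N` is.
Since `uᵢ⁽¹⁾ = uᵢ₊₁`, multiplying the `(k+1)`-st term by `u₀ⁿ = (t−θ)ⁿ` gives the twist of the
`k`-th, so `(t−θ)ⁿ E_{N+1} − E_{N+1}⁽¹⁾` telescopes to `e` minus the twist of the `N`-th term,
which tends to `0`.
-/

namespace PowerSeries

variable {k k' : Type*} [Field k] [Field k']

theorem map_inv (φ : k →+* k') (f : k⟦X⟧) : map φ f⁻¹ = (map φ f)⁻¹ := by
  have hc : constantCoeff (map φ f) = φ (constantCoeff f) := by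
    rw [← coeff_zero_eq_constantCoeff_apply, coeff_map, coeff_zero_eq_constantCoeff_apply]
  by_cases hf : constantCoeff f = 0
  · rw [inv_eq_zero.2 hf, inv_eq_zero.2 (by rw [hc, hf, map_zero]), map_zero]
  · rw [eq_inv_iff_mul_eq_one (by rwa [hc, map_ne_zero]), ← map_mul,
      PowerSeries.inv_mul_cancel _ hf, map_one]

variable (k) in
def invMonoidHom : k⟦X⟧ →* k⟦X⟧ where
  toFun f := f⁻¹
  map_one' := inv_one
  map_mul' f g := by rw [PowerSeries.mul_inv_rev, mul_comm]

theorem invMonoidHom_apply (f : k⟦X⟧) : invMonoidHom k f = f⁻¹ := rfl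

theorem coeff_inv_X_sub_C {c : k} (hc : c ≠ 0) (j : ℕ) :
    coeff j (X - C c)⁻¹ = -c⁻¹ ^ (j + 1) := by
  have h : (X - C c)⁻¹ = -invUnitsSub (Units.mk0 c hc) := by
    symm
    rw [eq_inv_iff_mul_eq_one (by simpa using hc), neg_mul, ← mul_neg, neg_sub]
    exact invUnitsSub_mul_sub _
  rw [h, map_neg, coeff_invUnitsSub, inv_pow]
  simp [divp]

end PowerSeries

namespace Carlitz

section Valuation

variable (F : Type) [Field F]

/-- The Laurent series with no monomial `θ^{-j}` for `j < m`, i.e. those with `|x| ≤ q^{-m}`. -/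
def orderGE (m : ℤ) : AddSubgroup (Kinf F) where
  carrier := {x | ∀ j < m, x.coeff j = 0}
  zero_mem' _ _ := HahnSeries.coeff_zero
  add_mem' hx hy j hj := by rw [HahnSeries.coeff_add, hx j hj, hy j hj, add_zero]
  neg_mem' hx j hj := by rw [HahnSeries.coeff_neg, hx j hj, neg_zero]

def gaussOrderGE (m : ℤ) : AddSubgroup (TS F) where
  carrier := {f | ∀ i, PowerSeries.coeff i f ∈ orderGE F m}
  zero_mem' i := by rw [map_zero]; exact zero_mem _
  add_mem' hf hg i := by simpa using add_mem (hf i) (hg i)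
  neg_mem' hf i := by simpa using neg_mem (hf i)

variable {F}

theorem orderGE_antitone : Antitone (orderGE F) :=
  fun _ _ hm _ hx j hj => hx j (hj.trans_le hm)

theorem single_mem_orderGE {m s : ℤ} (h : m ≤ s) (r : F) :
    (HahnSeries.single s r : Kinf F) ∈ orderGE F m :=
  fun _ hj => HahnSeries.coeff_single_of_ne (by omega)

theorem mul_mem_orderGE {a b : ℤ} {x y : Kinf F} (hx : x ∈ orderGE F a) (hy : y ∈ orderGE F b) :
    x * y ∈ orderGE F (a + b) := by
  intro j hj
  rw [HahnSeries.coeff_mul]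
  refine Finset.sum_eq_zero fun p hp => ?_
  rw [Finset.mem_antidiagonal] at hp
  by_cases h : p.1 < a
  · rw [hx _ h, zero_mul]
  · rw [hy p.2 (by omega), mul_zero]

theorem one_mem_orderGE : (1 : Kinf F) ∈ orderGE F 0 := by
  rw [← HahnSeries.single_zero_one]
  exact single_mem_orderGE le_rfl 1

theorem pow_mem_orderGE {m : ℤ} {x : Kinf F} (hx : x ∈ orderGE F m) (k : ℕ) :
    x ^ k ∈ orderGE F (k * m) := by
  induction k with
  | zero => simpa using one_mem_orderGE
  | succ k ih => simpa [pow_succ, add_mul] using mul_mem_orderGE ih hx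

theorem theta_ne_zero : theta F ≠ 0 :=
  HahnSeries.single_ne_zero one_ne_zero

theorem theta_inv_mem_orderGE : (theta F)⁻¹ ∈ orderGE F 1 := by
  rw [inv_eq_of_mul_eq_one_right (b := HahnSeries.single 1 1) (by
    rw [theta, HahnSeries.single_mul_single, neg_add_cancel, mul_one, HahnSeries.single_zero_one])]
  exact single_mem_orderGE le_rfl 1

theorem le_order_iff_mem_orderGE {m : ℤ} {x : Kinf F} (hx : x ≠ 0) :
    m ≤ x.order ↔ x ∈ orderGE F m :=
  ⟨fun h _ hj => HahnSeries.coeff_eq_zero_of_lt_order (hj.trans_le h),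
    fun h => not_lt.1 fun hlt => hx (HahnSeries.coeff_order_eq_zero.1 (h _ hlt))⟩

theorem gaussOrderGE_antitone : Antitone (gaussOrderGE F) :=
  fun _ _ hm _ hf i => orderGE_antitone hm (hf i)

theorem C_mem_gaussOrderGE {m : ℤ} {x : Kinf F} (hx : x ∈ orderGE F m) :
    PowerSeries.C x ∈ gaussOrderGE F m := by
  intro i
  rw [PowerSeries.coeff_C]
  split_ifs
  · exact hx
  · exact zero_mem _

theorem one_mem_gaussOrderGE : (1 : TS F) ∈ gaussOrderGE F 0 := by
  simpa using C_mem_gaussOrderGE (F := F) one_mem_orderGE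

theorem X_mem_gaussOrderGE : (PowerSeries.X : TS F) ∈ gaussOrderGE F 0 := by
  intro i
  rw [PowerSeries.coeff_X]
  split_ifs
  · exact one_mem_orderGE
  · exact zero_mem _

theorem tt_sub_th_mem_gaussOrderGE : tt F - th F ∈ gaussOrderGE F (-1) :=
  sub_mem (gaussOrderGE_antitone (by norm_num) X_mem_gaussOrderGE)
    (C_mem_gaussOrderGE (single_mem_orderGE le_rfl 1))

theorem mul_mem_gaussOrderGE {a b : ℤ} {f g : TS F} (hf : f ∈ gaussOrderGE F a)
    (hg : g ∈ gaussOrderGE F b) : f * g ∈ gaussOrderGE F (a + b) := fun i => by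
  rw [PowerSeries.coeff_mul]
  exact sum_mem fun p _ => mul_mem_orderGE (hf p.1) (hg p.2)

theorem pow_mem_gaussOrderGE {m : ℤ} {f : TS F} (hf : f ∈ gaussOrderGE F m) (k : ℕ) :
    f ^ k ∈ gaussOrderGE F (k * m) := by
  induction k with
  | zero => simpa using one_mem_gaussOrderGE
  | succ k ih => simpa [pow_succ, add_mul] using mul_mem_gaussOrderGE ih hf

theorem prod_mem_gaussOrderGE {ι : Type*} {s : Finset ι} {m : ι → ℤ} {f : ι → TS F}
    (hf : ∀ i ∈ s, f i ∈ gaussOrderGE F (m i)) : ∏ i ∈ s, f i ∈ gaussOrderGE F (∑ i ∈ s, m i) := by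
  induction s using Finset.cons_induction with
  | empty => simpa using one_mem_gaussOrderGE
  | cons a s ha ih =>
    rw [Finset.prod_cons, Finset.sum_cons]
    exact mul_mem_gaussOrderGE (hf a (Finset.mem_cons_self a s))
      (ih fun i hi => hf i (Finset.mem_cons_of_mem hi))

theorem eq_zero_of_forall_mem_gaussOrderGE {f : TS F} (hf : ∀ m, f ∈ gaussOrderGE F m) :
    f = 0 :=
  PowerSeries.ext fun i => HahnSeries.coeff_injective <| funext fun j => hf (j + 1) i j (by omega)

theorem exists_limit_of_sub_mem_gaussOrderGE {s : ℕ → TS F}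
    (hs : ∀ N M : ℕ, N ≤ M → s M - s N ∈ gaussOrderGE F (N + 1)) :
    ∃ L, ∀ N : ℕ, L - s N ∈ gaussOrderGE F (N + 1) := by
  -- The `j`-th coefficient of the limit is that of `s j.toNat`, after which it no longer changes.
  have stable : ∀ i (N M : ℕ) (j : ℤ), N ≤ M → j < N + 1 →
      (PowerSeries.coeff i (s M)).coeff j = (PowerSeries.coeff i (s N)).coeff j := by
    intro i N M j hNM hj
    have h := hs N M hNM i j hj
    rwa [map_sub, HahnSeries.coeff_sub, sub_eq_zero] at h
  have bdd (i : ℕ) :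
      BddBelow (Function.support fun j : ℤ => (PowerSeries.coeff i (s j.toNat)).coeff j) := by
    refine ⟨min 1 (PowerSeries.coeff i (s 0)).order, fun j hj => ?_⟩
    by_contra! hlt
    rw [Function.mem_support, stable i 0 j.toNat j (Nat.zero_le _) (by omega)] at hj
    exact (HahnSeries.order_le_of_coeff_ne_zero hj).not_gt (hlt.trans_le (min_le_right _ _))
  refine ⟨PowerSeries.mk fun i => HahnSeries.ofSuppBddBelow _ (bdd i), fun N i j hj => ?_⟩
  rw [map_sub, HahnSeries.coeff_sub, PowerSeries.coeff_mk, HahnSeries.coeff_ofSuppBddBelow,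
    sub_eq_zero, ← stable i j.toNat (max j.toNat N) j (le_max_left _ _) (by omega),
    stable i N (max j.toNat N) j (le_max_right _ _) hj]

end Valuation

section TateAlgebra

variable {F : Type} [Field F] [Fintype F]

local notation "q" => Fintype.card F

theorem one_lt_card_ennreal : (1 : ℝ≥0∞) < q := by
  exact_mod_cast Fintype.one_lt_card (α := F)

theorem card_zpow_strictMono : StrictMono fun m : ℤ => (q : ℝ≥0∞) ^ m := by
  have hq : (q : NNReal) ≠ 0 := Nat.cast_ne_zero.2 (Fintype.card_ne_zero (α := F))
  intro a b hab
  dsimp only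
  rw [← ENNReal.coe_natCast, ← ENNReal.coe_zpow hq, ← ENNReal.coe_zpow hq, ENNReal.coe_lt_coe]
  exact zpow_right_strictMono₀ (by exact_mod_cast Fintype.one_lt_card (α := F)) hab

theorem Kabs_le_zpow_iff {m : ℤ} {x : Kinf F} :
    Kabs q x ≤ (q : ℝ≥0∞) ^ (-m) ↔ x ∈ orderGE F m := by
  unfold Kabs
  split_ifs with hx
  · simp [hx, zero_mem]
  · rw [card_zpow_strictMono.le_iff_le, neg_le_neg_iff, le_order_iff_mem_orderGE hx]

theorem Kabs_lt_zpow_iff {m : ℤ} {x : Kinf F} :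
    Kabs q x < (q : ℝ≥0∞) ^ m ↔ x ∈ orderGE F (1 - m) := by
  unfold Kabs
  split_ifs with hx
  · simp [hx, zero_mem, ENNReal.zpow_pos (zero_lt_one.trans one_lt_card_ennreal).ne']
  · rw [card_zpow_strictMono.lt_iff_lt, ← le_order_iff_mem_orderGE hx]
    omega

theorem gnorm_le_zpow_iff {m : ℤ} {f : TS F} :
    gnorm F f ≤ (q : ℝ≥0∞) ^ (-m) ↔ f ∈ gaussOrderGE F m := by
  simp only [gnorm, iSup_le_iff, Kabs_le_zpow_iff]
  rfl

theorem mem_gaussOrderGE_of_gnorm_lt {m : ℤ} {f : TS F} (h : gnorm F f < (q : ℝ≥0∞) ^ m) :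
    f ∈ gaussOrderGE F (1 - m) :=
  fun i => Kabs_lt_zpow_iff.1 ((le_iSup (fun i => Kabs q (coeffT F i f)) i).trans_lt h)

theorem tendsto_card_zpow_neg :
    Tendsto (fun N : ℕ => (q : ℝ≥0∞) ^ (-(N : ℤ))) atTop (nhds 0) := by
  have h := ENNReal.tendsto_pow_atTop_nhds_zero_of_lt_one
    (ENNReal.inv_lt_one.2 (one_lt_card_ennreal (F := F)))
  simpa [ENNReal.zpow_neg, ENNReal.inv_pow] using h

theorem isTate_iff {f : TS F} :
    IsTate F f ↔ ∀ m, ∀ᶠ i in atTop, PowerSeries.coeff i f ∈ orderGE F m := by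
  simp_rw [IsTate, ENNReal.tendsto_nhds_zero, ← Kabs_le_zpow_iff]
  refine ⟨fun h m => h _ (ENNReal.zpow_pos (zero_lt_one.trans (one_lt_card_ennreal (F := F))).ne'
    (ENNReal.natCast_ne_top _) _), fun h ε hε => ?_⟩
  obtain ⟨N, hN⟩ := ((tendsto_card_zpow_neg (F := F)).eventually (gt_mem_nhds hε)).exists
  filter_upwards [h N] with i hi using hi.trans hN.le

theorem isTate_of_forall_sub_mem {s : ℕ → TS F} {L : TS F} (hs : ∀ N, IsTate F (s N))
    (h : ∀ N : ℕ, L - s N ∈ gaussOrderGE F (N + 1)) : IsTate F L := by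
  simp_rw [isTate_iff] at hs ⊢
  intro m
  filter_upwards [hs m.toNat m] with i hi
  simpa using add_mem (gaussOrderGE_antitone (by omega) (h m.toNat) i) hi

theorem TT_of_forall_sub_mem {s : ℕ → TS F} {L : TS F}
    (h : ∀ N : ℕ, L - s N ∈ gaussOrderGE F (N + 1)) : TT F s L :=
  tendsto_of_tendsto_of_tendsto_of_le_of_le tendsto_const_nhds tendsto_card_zpow_neg
    (fun _ => zero_le) fun N => gnorm_le_zpow_iff.2 (gaussOrderGE_antitone (by omega) (h N))

theorem eventually_coeff_mul_mem_orderGE {a b : ℤ} {f g : TS F} (ha : f ∈ gaussOrderGE F a)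
    (hb : g ∈ gaussOrderGE F b) (hf : IsTate F f) (hg : IsTate F g) (m : ℤ) :
    ∀ᶠ i in atTop, PowerSeries.coeff i (f * g) ∈ orderGE F m := by
  obtain ⟨If, hIf⟩ := eventually_atTop.1 (isTate_iff.1 hf (m - b))
  obtain ⟨Ig, hIg⟩ := eventually_atTop.1 (isTate_iff.1 hg (m - a))
  refine eventually_atTop.2 ⟨If + Ig, fun i hi => ?_⟩
  rw [PowerSeries.coeff_mul]
  refine sum_mem fun p hp => ?_
  rw [Finset.HasAntidiagonal.mem_antidiagonal] at hp
  by_cases h : If ≤ p.1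
  · simpa using mul_mem_orderGE (hIf p.1 h) (hb p.2)
  · simpa using mul_mem_orderGE (ha p.1) (hIg p.2 (by omega))

variable (F) in
/-- Tate series are bounded anyway; recording a bound makes closure under products immediate. -/
def tateSubring : Subring (TS F) where
  carrier := {f | (∃ m, f ∈ gaussOrderGE F m) ∧ IsTate F f}
  zero_mem' := ⟨⟨0, zero_mem _⟩, isTate_iff.2 fun _ => .of_forall fun _ => by
    rw [map_zero]; exact zero_mem _⟩
  one_mem' := ⟨⟨0, one_mem_gaussOrderGE⟩, isTate_iff.2 fun _ =>
    eventually_atTop.2 ⟨1, fun i hi => by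
      rw [PowerSeries.coeff_one, if_neg (by omega)]
      exact zero_mem _⟩⟩
  add_mem' := fun ⟨⟨a, ha⟩, hf⟩ ⟨⟨b, hb⟩, hg⟩ =>
    ⟨⟨min a b, add_mem (gaussOrderGE_antitone (min_le_left a b) ha)
      (gaussOrderGE_antitone (min_le_right a b) hb)⟩,
    isTate_iff.2 fun m => by
      filter_upwards [isTate_iff.1 hf m, isTate_iff.1 hg m] with i h1 h2
      simpa using add_mem h1 h2⟩
  neg_mem' := fun ⟨⟨a, ha⟩, hf⟩ => ⟨⟨a, neg_mem ha⟩, isTate_iff.2 fun m => by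
    filter_upwards [isTate_iff.1 hf m] with i h
    simpa using neg_mem h⟩
  mul_mem' := fun ⟨⟨a, ha⟩, hf⟩ ⟨⟨b, hb⟩, hg⟩ =>
    ⟨⟨a + b, mul_mem_gaussOrderGE ha hb⟩,
      isTate_iff.2 (eventually_coeff_mul_mem_orderGE ha hb hf hg)⟩

variable (F) in
def twistHom : TS F →+* TS F :=
  PowerSeries.map (FiniteField.frobeniusAlgHom F (Kinf F)).toRingHom

theorem twistHom_apply (f : TS F) : twistHom F f = twist F f := by
  ext i
  simp [twistHom, twist, coeffT]

theorem coeff_twist (i : ℕ) (f : TS F) :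
    PowerSeries.coeff i (twist F f) = PowerSeries.coeff i f ^ q :=
  PowerSeries.coeff_mk _ _

theorem twistIter_zero (f : TS F) : twistIter F 0 f = f := rfl

theorem twistIter_succ (k : ℕ) (f : TS F) : twistIter F (k + 1) f = twist F (twistIter F k f) :=
  Function.iterate_succ_apply' _ _ _

theorem twist_mem_gaussOrderGE {m : ℤ} {f : TS F} (hf : f ∈ gaussOrderGE F m) :
    twist F f ∈ gaussOrderGE F (q * m) := fun i => by
  rw [coeff_twist]
  exact pow_mem_orderGE (hf i) q

theorem twist_mem_gaussOrderGE_of_nonneg {m : ℤ} (hm : 0 ≤ m) {f : TS F}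
    (hf : f ∈ gaussOrderGE F m) : twist F f ∈ gaussOrderGE F m :=
  gaussOrderGE_antitone (le_mul_of_one_le_left hm (by exact_mod_cast Fintype.card_pos))
    (twist_mem_gaussOrderGE hf)

theorem twistIter_mem_gaussOrderGE {m : ℤ} {f : TS F} (hf : f ∈ gaussOrderGE F m) (k : ℕ) :
    twistIter F k f ∈ gaussOrderGE F (q ^ k * m) := by
  induction k with
  | zero => rw [pow_zero, one_mul]; exact hf
  | succ k ih => simpa [twistIter_succ, pow_succ', mul_assoc] using twist_mem_gaussOrderGE ih

theorem twist_mem_tateSubring {f : TS F} (hf : f ∈ tateSubring F) : twist F f ∈ tateSubring F := by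
  obtain ⟨⟨a, ha⟩, hf⟩ := hf
  refine ⟨⟨_, twist_mem_gaussOrderGE ha⟩, isTate_iff.2 fun m => ?_⟩
  filter_upwards [isTate_iff.1 hf (max m 0)] with i hi
  rw [coeff_twist]
  refine orderGE_antitone ?_ (pow_mem_orderGE hi q)
  exact (le_max_left m 0).trans
    (le_mul_of_one_le_left (le_max_right m 0) (by exact_mod_cast Fintype.card_pos))

theorem twistIter_mem_tateSubring {f : TS F} (hf : f ∈ tateSubring F) (k : ℕ) :
    twistIter F k f ∈ tateSubring F := by
  induction k with
  | zero => exact hf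
  | succ k ih => rw [twistIter_succ]; exact twist_mem_tateSubring ih

variable (F) in
def tSubTheta (i : ℕ) : TS F := tt F - PowerSeries.C (theta F ^ q ^ i)

theorem tSubTheta_zero : tSubTheta F 0 = tt F - th F := by
  rw [tSubTheta, pow_zero, pow_one, th]

theorem tSubTheta_pow_mul_inv_pow (i n : ℕ) : tSubTheta F i ^ n * (tSubTheta F i)⁻¹ ^ n = 1 := by
  rw [← mul_pow, PowerSeries.mul_inv_cancel _ (by simp [tSubTheta, tt, theta_ne_zero]), one_pow]

theorem twist_tSubTheta (i : ℕ) : twist F (tSubTheta F i) = tSubTheta F (i + 1) := by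
  rw [← twistHom_apply, tSubTheta, tSubTheta, twistHom, map_sub, tt, PowerSeries.map_X,
    PowerSeries.map_C]
  simp [pow_succ, pow_mul]

theorem twist_inv_tSubTheta (i : ℕ) : twist F (tSubTheta F i)⁻¹ = (tSubTheta F (i + 1))⁻¹ := by
  rw [← twistHom_apply, twistHom, PowerSeries.map_inv, ← twistHom, twistHom_apply,
    twist_tSubTheta]

theorem coeff_inv_tSubTheta_mem_orderGE (i j : ℕ) :
    PowerSeries.coeff j (tSubTheta F i)⁻¹ ∈ orderGE F (q ^ i * (j + 1) : ℕ) := by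
  rw [tSubTheta, tt, PowerSeries.coeff_inv_X_sub_C (pow_ne_zero _ theta_ne_zero), neg_mem_iff,
    ← inv_pow, ← pow_mul]
  simpa only [mul_one] using pow_mem_orderGE theta_inv_mem_orderGE (q ^ i * (j + 1))

theorem inv_tSubTheta_mem_gaussOrderGE (i : ℕ) :
    (tSubTheta F i)⁻¹ ∈ gaussOrderGE F (q ^ i : ℕ) := fun j =>
  orderGE_antitone (Nat.cast_le.2 (Nat.le_mul_of_pos_right _ j.succ_pos))
    (coeff_inv_tSubTheta_mem_orderGE i j)

theorem inv_tSubTheta_mem_tateSubring (i : ℕ) : (tSubTheta F i)⁻¹ ∈ tateSubring F := by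
  refine ⟨⟨_, inv_tSubTheta_mem_gaussOrderGE i⟩, isTate_iff.2 fun m => ?_⟩
  filter_upwards [eventually_ge_atTop m.toNat] with j hj
  refine orderGE_antitone ?_ (coeff_inv_tSubTheta_mem_orderGE i j)
  have : ((j + 1 : ℕ) : ℤ) ≤ (q ^ i * (j + 1) : ℕ) :=
    Nat.cast_le.2 (Nat.le_mul_of_pos_left _ (by positivity))
  omega

variable (F) in
def xiTerm (n : ℕ) (e : TS F) (k : ℕ) : TS F :=
  twistIter F k e * ∏ i ∈ Finset.range (k + 1), (tSubTheta F i)⁻¹ ^ n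

theorem xiPartial_eq_sum_xiTerm (n : ℕ) (e : TS F) (N : ℕ) :
    xiPartial F n e N = ∑ k ∈ Finset.range N, xiTerm F n e k := by
  refine Finset.sum_congr rfl fun k _ => ?_
  rw [xiTerm, ← PowerSeries.invMonoidHom_apply, map_prod]
  simp only [map_pow, PowerSeries.invMonoidHom_apply, tSubTheta]

theorem xiTerm_mem_gaussOrderGE {n : ℕ} {e : TS F} (he : e ∈ gaussOrderGE F (1 - n)) (k : ℕ) :
    xiTerm F n e k ∈ gaussOrderGE F (k + 1) := by
  have hprod := prod_mem_gaussOrderGE fun i (_ : i ∈ Finset.range (k + 1)) =>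
    pow_mem_gaussOrderGE (inv_tSubTheta_mem_gaussOrderGE (F := F) i) n
  refine gaussOrderGE_antitone ?_ (mul_mem_gaussOrderGE (twistIter_mem_gaussOrderGE he k) hprod)
  have hk : (k : ℤ) + 1 ≤ (q ^ k : ℕ) := by exact_mod_cast Nat.lt_pow_self Fintype.one_lt_card
  have hsum : (n : ℤ) * (q ^ k : ℕ) ≤ ∑ i ∈ Finset.range (k + 1), (n : ℤ) * (q ^ i : ℕ) := by
    rw [Finset.sum_range_succ]
    exact le_add_of_nonneg_left (Finset.sum_nonneg fun i _ => by positivity)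
  push_cast at hk hsum ⊢
  linarith

theorem xiPartial_sub_mem_gaussOrderGE {n : ℕ} {e : TS F} (he : e ∈ gaussOrderGE F (1 - n))
    {N M : ℕ} (h : N ≤ M) : xiPartial F n e M - xiPartial F n e N ∈ gaussOrderGE F (N + 1) := by
  rw [xiPartial_eq_sum_xiTerm, xiPartial_eq_sum_xiTerm, ← Finset.sum_Ico_eq_sub _ h]
  refine sum_mem fun k hk => gaussOrderGE_antitone ?_ (xiTerm_mem_gaussOrderGE he k)
  have := (Finset.mem_Ico.1 hk).1
  omega

theorem xiPartial_mem_tateSubring (n : ℕ) {e : TS F} (he : e ∈ tateSubring F) (N : ℕ) :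
    xiPartial F n e N ∈ tateSubring F := by
  rw [xiPartial_eq_sum_xiTerm]
  exact sum_mem fun k _ => mul_mem (twistIter_mem_tateSubring he k)
    (prod_mem fun i _ => pow_mem (inv_tSubTheta_mem_tateSubring i) n)

theorem tSubTheta_zero_pow_mul_xiTerm_zero (n : ℕ) (e : TS F) :
    (tt F - th F) ^ n * xiTerm F n e 0 = e := by
  rw [xiTerm, Finset.prod_range_one, twistIter_zero, ← tSubTheta_zero]
  linear_combination e * tSubTheta_pow_mul_inv_pow (F := F) 0 n

theorem tSubTheta_zero_pow_mul_xiTerm_succ (n : ℕ) (e : TS F) (k : ℕ) :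
    (tt F - th F) ^ n * xiTerm F n e (k + 1) = twist F (xiTerm F n e k) := by
  rw [xiTerm, xiTerm, Finset.prod_range_succ', ← tSubTheta_zero, ← twistHom_apply, map_mul,
    map_prod, twistHom_apply, ← twistIter_succ]
  simp only [map_pow, twistHom_apply, twist_inv_tSubTheta]
  linear_combination
    (twistIter F (k + 1) e * ∏ i ∈ Finset.range (k + 1), (tSubTheta F (i + 1))⁻¹ ^ n) *
      tSubTheta_pow_mul_inv_pow (F := F) 0 n

theorem sub_twist_xiPartial_succ (n : ℕ) (e : TS F) (N : ℕ) :
    (tt F - th F) ^ n * xiPartial F n e (N + 1) - twist F (xiPartial F n e (N + 1)) =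
      e - twist F (xiTerm F n e N) := by
  have hmul : (tt F - th F) ^ n * xiPartial F n e (N + 1) =
      ∑ k ∈ Finset.range N, twist F (xiTerm F n e k) + e := by
    rw [xiPartial_eq_sum_xiTerm, Finset.mul_sum, Finset.sum_range_succ',
      tSubTheta_zero_pow_mul_xiTerm_zero]
    simp only [tSubTheta_zero_pow_mul_xiTerm_succ]
  have htwist : twist F (xiPartial F n e (N + 1)) =
      ∑ k ∈ Finset.range N, twist F (xiTerm F n e k) + twist F (xiTerm F n e N) := by
    rw [xiPartial_eq_sum_xiTerm, ← twistHom_apply, map_sum, Finset.sum_range_succ]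
    simp only [twistHom_apply]
  rw [hmul, htwist]
  abel

theorem sub_twist_eq_of_forall_sub_mem {n : ℕ} {e ξ : TS F} (he : e ∈ gaussOrderGE F (1 - n))
    (hξ : ∀ N : ℕ, ξ - xiPartial F n e N ∈ gaussOrderGE F (N + 1)) :
    (tt F - th F) ^ n * ξ - twist F ξ = e := by
  refine sub_eq_zero.1 (eq_zero_of_forall_mem_gaussOrderGE fun m => ?_)
  obtain ⟨N, hN⟩ : ∃ N : ℕ, m ≤ N + 1 - n := ⟨(m + n).toNat, by omega⟩
  set δ := ξ - xiPartial F n e (N + 1)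
  have hsplit : (tt F - th F) ^ n * ξ - twist F ξ - e =
      (tt F - th F) ^ n * δ - twist F δ - twist F (xiTerm F n e N) := by
    rw [← twistHom_apply δ, map_sub, twistHom_apply, twistHom_apply]
    linear_combination sub_twist_xiPartial_succ n e N
  have hδ : δ ∈ gaussOrderGE F (N + 1) := gaussOrderGE_antitone (by omega) (hξ (N + 1))
  have hpow : (tt F - th F) ^ n ∈ gaussOrderGE F (-n) := by
    simpa using pow_mem_gaussOrderGE tt_sub_th_mem_gaussOrderGE n
  rw [hsplit]
  refine sub_mem (sub_mem ?_ ?_) ?_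
  · exact gaussOrderGE_antitone (by omega) (mul_mem_gaussOrderGE hpow hδ)
  · exact gaussOrderGE_antitone (by omega) (twist_mem_gaussOrderGE_of_nonneg (by omega) hδ)
  · exact gaussOrderGE_antitone (by omega)
      (twist_mem_gaussOrderGE_of_nonneg (by omega) (xiTerm_mem_gaussOrderGE he N))

end TateAlgebra

variable (F : Type) [Field F] [Fintype F]

theorem statement9 (q n : ℕ) (hq : q = Fintype.card F)
    (e : TS F) (he : IsTate F e) (hnorm : gnorm F e < (q : ℝ≥0∞) ^ n) :
    ∃ ξ : TS F, IsTate F ξ ∧ TT F (xiPartial F n e) ξ ∧ gnorm F ξ < 1 ∧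
      (tt F - th F) ^ n * ξ - twist F ξ = e := by
  subst hq
  have he_le : e ∈ gaussOrderGE F (1 - n) :=
    mem_gaussOrderGE_of_gnorm_lt (by rwa [zpow_natCast])
  obtain ⟨ξ, hξ⟩ := exists_limit_of_sub_mem_gaussOrderGE fun N M =>
    xiPartial_sub_mem_gaussOrderGE (N := N) (M := M) he_le
  have hξ_le : ξ ∈ gaussOrderGE F 1 := by simpa [xiPartial] using hξ 0
  have hpartial N := (xiPartial_mem_tateSubring n ⟨⟨_, he_le⟩, he⟩ N).2
  refine ⟨ξ, isTate_of_forall_sub_mem hpartial hξ, TT_of_forall_sub_mem hξ, ?_,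
    sub_twist_eq_of_forall_sub_mem he_le hξ⟩
  calc gnorm F ξ ≤ (Fintype.card F : ℝ≥0∞) ^ (-1 : ℤ) := gnorm_le_zpow_iff.2 hξ_le
    _ < 1 := by
      rw [zpow_neg_one]
      exact ENNReal.inv_lt_one.2 one_lt_card_ennreal

end Carlitz
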